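/- (Lemma 2.5) Let n ≥ 2, let X_1, ..., X_n be i.i.d. random variables taking values in [0,1], let c > 0 with E(X_1) > c, let Y_i = X_i - i·c, and set v_i = V(Y_1,...,Y_i) for i = 1,...,n-1. Assume that P(X_1 ∈ {1, v_{n-1}, ..., v_1, 0}) = 1, P(X_1 = 1) > 0 and P(X_1 = 0) > 0. Then c - P(X_1 = 1) < 0, i.e. P(X_1 = 1) > c. -/

import Mathlib

open MeasureTheory ProbabilityTheory

/-- The σ-algebra generated by `Y 1, ..., Y i`. -/
def priorSigma {Ω : Type*} (Y : ℕ → Ω → ℝ) (i : ℕ) : MeasurableSpace Ω :=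
  ⨆ j ∈ Finset.Icc 1 i, MeasurableSpace.comap (Y j) Real.measurableSpace

/-- `τ` is a stopping rule for `Y 1, ..., Y n`: it takes values in `{1, ..., n}` and
each event `{τ = i}` depends only on `Y 1, ..., Y i`. -/
def IsStopRule {Ω : Type*} (Y : ℕ → Ω → ℝ) (n : ℕ) (τ : Ω → ℕ) : Prop :=
  (∀ ω, τ ω ∈ Finset.Icc 1 n) ∧
  ∀ i ∈ Finset.Icc 1 n, MeasurableSet[priorSigma Y i] {ω | τ ω = i}

/-- `V(Y_1,...,Y_n) = sup_τ E(Y_τ)`: the optimal expected return of the statistician. -/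
noncomputable def Vn {Ω : Type*} [MeasurableSpace Ω] (μ : Measure Ω)
    (Y : ℕ → Ω → ℝ) (n : ℕ) : ℝ :=
  sSup {r | ∃ τ, IsStopRule Y n τ ∧ r = ∫ ω, Y (τ ω) ω ∂μ}

/-- `M(Y_1,...,Y_n) = E(max_{1 ≤ i ≤ n} Y_i)`: the expected return of the prophet. -/
noncomputable def Mn {Ω : Type*} [MeasurableSpace Ω] (μ : Measure Ω)
    (Y : ℕ → Ω → ℝ) (n : ℕ) : ℝ :=
  ∫ ω, sSup ((fun i => Y i ω) '' Set.Icc 1 n) ∂μ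

/-!
Put `v = V(Y_1, …, Y_{n-1})` and `p = P(X_1 = 1)`. Since `E Y_1 = E X_1 - c > 0` and
`Y_i ≤ 1 - c`, we have `0 < v ≤ 1 - c`; as every `v_j ≤ v`, the support hypothesis gives
`X_i ≤ v + (1 - v) 1{X_i = 1}` almost surely. Hence for every stopping rule `τ`
`Y_τ ≤ v + ∑_{i ≤ τ} ((1 - v) 1{X_i = 1} - c)`, and since `{i ≤ τ}` is determined by
`X_1, …, X_{i-1}`, it is independent of `X_i`, so `E Y_τ ≤ v + ((1 - v) p - c) ∑_i P(τ ≥ i)`.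
If `(1 - v) p < c` this is at most `v + (1 - v) p - c < v` because `P(τ ≥ 1) = 1`, contradicting
`v = sup_τ E Y_τ`. Therefore `c ≤ (1 - v) p < p`.
-/

section StopRule

variable {Ω : Type*} {X Y : ℕ → Ω → ℝ} {n : ℕ} {τ : Ω → ℕ}

lemma priorSigma_mono {i j : ℕ} (hij : i ≤ j) : priorSigma Y i ≤ priorSigma Y j :=
  iSup₂_le fun k hk => le_iSup₂_of_le k
    (Finset.mem_Icc.2 ⟨(Finset.mem_Icc.1 hk).1, (Finset.mem_Icc.1 hk).2.trans hij⟩) le_rfl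

lemma priorSigma_le [MeasurableSpace Ω] (hY : ∀ i, Measurable (Y i)) (i : ℕ) :
    priorSigma Y i ≤ ‹MeasurableSpace Ω› :=
  iSup₂_le fun j _ => (hY j).comap_le

lemma IsStopRule.of_sub (a : ℕ → ℝ) (hτ : IsStopRule (fun i ω => X i ω - a i) n τ) :
    IsStopRule X n τ :=
  ⟨hτ.1, fun i hi => iSup₂_mono (fun j _ =>
    ((measurable_sub_const (a j)).comp (comap_measurable (X j))).comap_le) _ (hτ.2 i hi)⟩

lemma IsStopRule.mono {k : ℕ} (hτ : IsStopRule Y n τ) (hnk : n ≤ k) : IsStopRule Y k τ := by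
  refine ⟨fun ω => ?_, fun i hi => ?_⟩
  · have := Finset.mem_Icc.1 (hτ.1 ω)
    exact Finset.mem_Icc.2 ⟨this.1, this.2.trans hnk⟩
  · by_cases hin : i ≤ n
    · exact hτ.2 i (Finset.mem_Icc.2 ⟨(Finset.mem_Icc.1 hi).1, hin⟩)
    · convert @MeasurableSet.empty Ω (priorSigma Y i)
      ext ω
      have := Finset.mem_Icc.1 (hτ.1 ω)
      simp only [Set.mem_ofPred_eq, Set.mem_empty_iff_false, iff_false]
      omega

lemma isStopRule_one (hn : 1 ≤ n) : IsStopRule Y n fun _ => 1 :=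
  ⟨fun _ => Finset.mem_Icc.2 ⟨le_rfl, hn⟩, fun i _ => MeasurableSet.const (1 = i)⟩

lemma IsStopRule.measurableSet_le (hτ : IsStopRule Y n τ) (j : ℕ) :
    MeasurableSet[priorSigma Y j] {ω | τ ω ≤ j} := by
  have hunion : {ω | τ ω ≤ j} = ⋃ k ∈ Finset.Icc 1 (min j n), {ω | τ ω = k} := by
    ext ω
    have := Finset.mem_Icc.1 (hτ.1 ω)
    simp only [Set.mem_ofPred_eq, Set.mem_iUnion, Finset.mem_Icc, exists_prop]
    exact ⟨fun h => ⟨τ ω, by omega, rfl⟩, fun ⟨k, hk, hkω⟩ => by omega⟩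
  rw [hunion]
  refine Finset.measurableSet_biUnion _ fun k hk => ?_
  have hk := Finset.mem_Icc.1 hk
  exact priorSigma_mono (by omega) _ (hτ.2 k (Finset.mem_Icc.2 ⟨hk.1, by omega⟩))

lemma IsStopRule.one_le (hτ : IsStopRule Y n τ) (ω : Ω) : 1 ≤ τ ω :=
  (Finset.mem_Icc.1 (hτ.1 ω)).1

variable [MeasurableSpace Ω]

lemma IsStopRule.measurable (hY : ∀ i, Measurable (Y i)) (hτ : IsStopRule Y n τ) :
    Measurable τ := by
  refine measurable_to_countable' fun i => ?_
  by_cases hi : i ∈ Finset.Icc 1 n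
  · exact priorSigma_le hY i _ (hτ.2 i hi)
  · convert MeasurableSet.empty
    ext ω
    exact ⟨fun h => hi (h ▸ hτ.1 ω), False.elim⟩

lemma integrable_stopped {μ : Measure Ω} (hτ : ∀ ω, τ ω ∈ Finset.Icc 1 n) (hτm : Measurable τ)
    (hY : ∀ i ∈ Finset.Icc 1 n, Integrable (Y i) μ) :
    Integrable (fun ω => Y (τ ω) ω) μ := by
  have hsum : (fun ω => Y (τ ω) ω) =
      fun ω => ∑ i ∈ Finset.Icc 1 n, {ω | τ ω = i}.indicator (Y i) ω := by
    funext ω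
    rw [Finset.sum_eq_single_of_mem (f := fun i => {ω | τ ω = i}.indicator (Y i) ω) (τ ω) (hτ ω)
      fun i _ hi => Set.indicator_of_notMem (s := {ω | τ ω = i}) (Ne.symm hi) _]
    exact (Set.indicator_of_mem (s := {ω | τ ω = τ ω}) rfl (Y (τ ω))).symm
  rw [hsum]
  exact integrable_finsetSum _ fun i hi => (hY i hi).indicator (hτm (measurableSet_singleton i))

end StopRule

section Value

variable {Ω : Type*} [MeasurableSpace Ω] {μ : Measure Ω} {Y : ℕ → Ω → ℝ} {n : ℕ} {b : ℝ}

lemma Vn_le (hn : 1 ≤ n) (h : ∀ τ, IsStopRule Y n τ → ∫ ω, Y (τ ω) ω ∂μ ≤ b) : Vn μ Y n ≤ b :=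
  csSup_le ⟨_, _, isStopRule_one hn, rfl⟩ fun _ ⟨τ, hτ, hr⟩ => hr ▸ h τ hτ

lemma le_Vn (h : ∀ τ, IsStopRule Y n τ → ∫ ω, Y (τ ω) ω ∂μ ≤ b) {τ : Ω → ℕ}
    (hτ : IsStopRule Y n τ) : ∫ ω, Y (τ ω) ω ∂μ ≤ Vn μ Y n :=
  le_csSup ⟨b, fun _ ⟨τ, hτ, hr⟩ => hr ▸ h τ hτ⟩ ⟨τ, hτ, rfl⟩

lemma Vn_mono {j : ℕ} (hj : 1 ≤ j) (hjn : j ≤ n)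
    (h : ∀ τ, IsStopRule Y n τ → ∫ ω, Y (τ ω) ω ∂μ ≤ b) : Vn μ Y j ≤ Vn μ Y n :=
  Vn_le hj fun _ hτ => le_Vn h (hτ.mono hjn)

end Value

section Independence

variable {Ω : Type*} [MeasurableSpace Ω] {μ : Measure Ω} {X : ℕ → Ω → ℝ} {n : ℕ} {τ : Ω → ℕ}

lemma indep_priorSigma_comap_succ (hX : ∀ i, Measurable (X i))
    (hindep : iIndepFun (fun i : Fin n => X (i.1 + 1)) μ) {j : ℕ} (hj : j < n) :
    Indep (priorSigma X j) (MeasurableSpace.comap (X (j + 1)) Real.measurableSpace) μ := by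
  have h := indep_iSup_of_disjoint (fun i => (hX _).comap_le) hindep.iIndep
    (S := {i : Fin n | i.1 < j}) (T := {⟨j, hj⟩}) (by simp)
  refine indep_of_indep_of_le_right (indep_of_indep_of_le_left h ?_)
    (le_iSup₂_of_le (f := fun (i : Fin n) _ => MeasurableSpace.comap (X (i.1 + 1)) _)
      ⟨j, hj⟩ rfl le_rfl)
  refine iSup₂_le fun k hk => ?_
  obtain ⟨hk1, hkj⟩ := Finset.mem_Icc.1 hk
  refine le_iSup₂_of_le (f := fun (i : Fin n) _ => MeasurableSpace.comap (X (i.1 + 1)) _)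
    ⟨k - 1, by omega⟩ (by simp only [Set.mem_ofPred_eq]; omega) ?_
  simp only [Nat.sub_add_cancel hk1, le_refl]

lemma IsStopRule.measure_le_inter_preimage (hX : ∀ i, Measurable (X i))
    (hindep : iIndepFun (fun i : Fin n => X (i.1 + 1)) μ) (hτ : IsStopRule X n τ) {i : ℕ}
    (hi : i ∈ Finset.Icc 1 n) {s : Set ℝ} (hs : MeasurableSet s) :
    μ ({ω | i ≤ τ ω} ∩ X i ⁻¹' s) = μ {ω | i ≤ τ ω} * μ (X i ⁻¹' s) := by
  obtain ⟨j, rfl⟩ : ∃ j, i = j + 1 := ⟨i - 1, by have := Finset.mem_Icc.1 hi; omega⟩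
  have hcompl : {ω | j + 1 ≤ τ ω} = {ω | τ ω ≤ j}ᶜ := by ext; simp
  rw [hcompl]
  exact (Indep_iff _ _ _).1 (indep_priorSigma_comap_succ hX hindep (by simp at hi; omega)) _ _
    (hτ.measurableSet_le j).compl ⟨s, hs, rfl⟩

end Independence

lemma sub_mul_le_add_sum_ite {x v a c : ℝ} {b : ℕ → ℝ} {k n : ℕ} (hk : k ∈ Finset.Icc 1 n)
    (hx : x ≤ v + a * b k) (hb : ∀ i, 0 ≤ a * b i) :
    x - k * c ≤ v + ∑ i ∈ Finset.Icc 1 n, if i ≤ k then a * b i - c else 0 := by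
  have hfilter : {i ∈ Finset.Icc 1 n | i ≤ k} = Finset.Icc 1 k := by
    ext i
    have := Finset.mem_Icc.1 hk
    simp only [Finset.mem_filter, Finset.mem_Icc]
    omega
  have hsingle : a * b k ≤ ∑ i ∈ Finset.Icc 1 k, a * b i :=
    Finset.single_le_sum (fun i _ => hb i) (Finset.mem_Icc.2 ⟨(Finset.mem_Icc.1 hk).1, le_rfl⟩)
  rw [← Finset.sum_filter, hfilter, Finset.sum_sub_distrib, Finset.sum_const, Nat.card_Icc,
    Nat.add_sub_cancel, nsmul_eq_mul]
  linarith

section Indicator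

variable {α : Type*}

lemma indicator_mul_indicator_sub_eq (G B : Set α) (a c : ℝ) :
    (G.indicator fun x => a * B.indicator 1 x - c) =
      fun x => a * (G ∩ B).indicator 1 x - c * G.indicator 1 x := by
  funext x
  by_cases hG : x ∈ G <;> by_cases hB : x ∈ B <;> simp [hG, hB]

variable [MeasurableSpace α] {μ : Measure α} [IsFiniteMeasure μ] {G B : Set α}

lemma integrable_indicator_mul_indicator_sub (hG : MeasurableSet G) (hB : MeasurableSet B)
    (a c : ℝ) : Integrable (G.indicator fun x => a * B.indicator 1 x - c) μ := by
  rw [indicator_mul_indicator_sub_eq]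
  exact (((integrable_const 1).indicator (hG.inter hB)).const_mul a).sub
    (((integrable_const 1).indicator hG).const_mul c)

lemma integral_indicator_mul_indicator_sub (hG : MeasurableSet G) (hB : MeasurableSet B)
    (a c : ℝ) :
    ∫ x, G.indicator (fun x => a * B.indicator 1 x - c) x ∂μ =
      a * μ.real (G ∩ B) - c * μ.real G := by
  rw [indicator_mul_indicator_sub_eq, integral_sub, integral_const_mul, integral_const_mul,
    integral_indicator_one (hG.inter hB), integral_indicator_one hG]
  · exact ((integrable_const 1).indicator (hG.inter hB)).const_mul a
  · exact ((integrable_const 1).indicator hG).const_mul c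

end Indicator

section Prize

variable {Ω : Type*} [MeasurableSpace Ω] {μ : Measure Ω} [IsProbabilityMeasure μ]
  {X : ℕ → Ω → ℝ} {n : ℕ} {τ : Ω → ℕ}

lemma IsStopRule.integrable_sub_mul (hX : ∀ i, Measurable (X i))
    (hident : ∀ i ∈ Set.Icc 1 n, IdentDistrib (X i) (X 1) μ μ) (hint : Integrable (X 1) μ)
    (hτ : IsStopRule X n τ) (c : ℝ) : Integrable (fun ω => X (τ ω) ω - τ ω * c) μ :=
  integrable_stopped (Y := fun i ω => X i ω - i * c) hτ.1 (hτ.measurable hX) fun i hi =>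
    ((hident i (Finset.mem_Icc.1 hi)).symm.integrable_snd hint).sub (integrable_const _)

lemma IsStopRule.integral_sub_mul_le (hX : ∀ i, Measurable (X i))
    (hident : ∀ i ∈ Set.Icc 1 n, IdentDistrib (X i) (X 1) μ μ) (hint : Integrable (X 1) μ)
    (hτ : IsStopRule X n τ) {b c : ℝ} (hc : 0 ≤ c) (hb : ∀ i ∈ Set.Icc 1 n, ∀ ω, X i ω ≤ b) :
    ∫ ω, (X (τ ω) ω - τ ω * c) ∂μ ≤ b - c := by
  refine (integral_mono (hτ.integrable_sub_mul hX hident hint c) (integrable_const (b - c))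
    fun ω => ?_).trans_eq (by simp)
  have hτω := Finset.mem_Icc.1 (hτ.1 ω)
  have hτc : c ≤ τ ω * c := le_mul_of_one_le_left hc (by exact_mod_cast hτω.1)
  linarith [hb (τ ω) hτω ω]

lemma ae_le_add_mul_indicator_one {Z : Ω → ℝ} {S : Set ℝ} {v : ℝ} (hZ : Measurable Z)
    (hS : MeasurableSet S) (hsupp : μ {ω | Z ω ∈ insert 1 S} = 1) (hSv : ∀ y ∈ S, y ≤ v)
    (hv : v ≤ 1) : ∀ᵐ ω ∂μ, Z ω ≤ v + (1 - v) * ({1} : Set ℝ).indicator 1 (Z ω) := by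
  have hsupp_ae : ∀ᵐ ω ∂μ, Z ω ∈ insert 1 S := by
    rwa [ae_iff_measure_eq (hZ (hS.insert 1)).nullMeasurableSet, measure_univ]
  filter_upwards [hsupp_ae] with ω hω
  rcases hω with hω | hω
  · simp [hω]
  · have := Set.indicator_nonneg (s := ({1} : Set ℝ)) (f := 1)
      (fun _ _ => zero_le_one (α := ℝ)) (Z ω)
    nlinarith [hSv _ hω]

lemma one_le_sum_measureReal_le (hτ : ∀ ω, 1 ≤ τ ω) (hn : 1 ≤ n) :
    1 ≤ ∑ i ∈ Finset.Icc 1 n, μ.real {ω | i ≤ τ ω} := by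
  have huniv : {ω | 1 ≤ τ ω} = Set.univ := Set.eq_univ_of_forall hτ
  calc (1 : ℝ) = μ.real {ω | 1 ≤ τ ω} := by rw [huniv, probReal_univ]
    _ ≤ _ := Finset.single_le_sum (f := fun i => μ.real {ω | i ≤ τ ω})
      (fun _ _ => measureReal_nonneg) (Finset.mem_Icc.2 ⟨le_rfl, hn⟩)

lemma integral_stopped_sub_mul_le (hX : ∀ i, Measurable (X i))
    (hindep : iIndepFun (fun i : Fin n => X (i.1 + 1)) μ)
    (hident : ∀ i ∈ Set.Icc 1 n, IdentDistrib (X i) (X 1) μ μ) (hint : Integrable (X 1) μ)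
    {s : Set ℝ} (hs : MeasurableSet s) {v a : ℝ} (c : ℝ) (ha : 0 ≤ a)
    (hprize : ∀ᵐ ω ∂μ, X 1 ω ≤ v + a * s.indicator 1 (X 1 ω)) (hτ : IsStopRule X n τ) :
    ∫ ω, (X (τ ω) ω - τ ω * c) ∂μ ≤
      v + (a * μ.real (X 1 ⁻¹' s) - c) * ∑ i ∈ Finset.Icc 1 n, μ.real {ω | i ≤ τ ω} := by
  set F : ℕ → Ω → ℝ := fun i =>
    {ω | i ≤ τ ω}.indicator fun ω => a * (X i ⁻¹' s).indicator 1 ω - c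
  have hG : ∀ i, MeasurableSet {ω | i ≤ τ ω} := fun i => hτ.measurable hX measurableSet_Ici
  have hF_int : ∀ i, Integrable (F i) μ := fun i =>
    integrable_indicator_mul_indicator_sub (hG i) (hX i hs) a c
  have hF_integral : ∀ i ∈ Finset.Icc 1 n,
      ∫ ω, F i ω ∂μ = μ.real {ω | i ≤ τ ω} * (a * μ.real (X 1 ⁻¹' s) - c) := by
    intro i hi
    have hsame : μ (X i ⁻¹' s) = μ (X 1 ⁻¹' s) :=
      (hident i (Finset.mem_Icc.1 hi)).measure_mem_eq hs
    have hprod : μ.real ({ω | i ≤ τ ω} ∩ X i ⁻¹' s) =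
        μ.real {ω | i ≤ τ ω} * μ.real (X 1 ⁻¹' s) := by
      simp only [measureReal_def, hτ.measure_le_inter_preimage hX hindep hi hs, hsame,
        ENNReal.toReal_mul]
    rw [integral_indicator_mul_indicator_sub (hG i) (hX i hs), hprod]
    ring
  have hprize_all : ∀ᵐ ω ∂μ, ∀ i ∈ Finset.Icc 1 n, X i ω ≤ v + a * s.indicator 1 (X i ω) := by
    refine (Filter.eventually_all_finset _).2 fun i hi =>
      (hident i (Finset.mem_Icc.1 hi)).symm.ae_mem_snd (t := {x | x ≤ v + a * s.indicator 1 x})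
        ?_ hprize
    exact measurableSet_le measurable_id
      (measurable_const.add (measurable_const.mul (measurable_one.indicator hs)))
  calc ∫ ω, (X (τ ω) ω - τ ω * c) ∂μ ≤ ∫ ω, (v + ∑ i ∈ Finset.Icc 1 n, F i ω) ∂μ := by
        refine integral_mono_ae (hτ.integrable_sub_mul hX hident hint c)
          ((integrable_const v).add (integrable_finsetSum _ fun i _ => hF_int i)) ?_
        filter_upwards [hprize_all] with ω hω
        refine (sub_mul_le_add_sum_ite (b := fun i => (X i ⁻¹' s).indicator 1 ω) (hτ.1 ω)
          (hω _ (hτ.1 ω)) fun i => mul_nonneg ha (Set.indicator_nonneg (fun _ _ => zero_le_one) _)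
          ).trans_eq (congrArg (v + ·) (Finset.sum_congr rfl fun i _ => ?_))
        simp only [F, Set.indicator_apply, Set.mem_ofPred_eq]
    _ = v + (a * μ.real (X 1 ⁻¹' s) - c) * ∑ i ∈ Finset.Icc 1 n, μ.real {ω | i ≤ τ ω} := by
        rw [integral_add (integrable_const v) (integrable_finsetSum _ fun i _ => hF_int i),
          integral_finsetSum _ fun i _ => hF_int i, Finset.sum_congr rfl hF_integral,
          Finset.mul_sum, integral_const, probReal_univ, one_smul]
        simp only [mul_comm]

end Prize

theorem stmt12_general
    {Ω : Type*} [MeasurableSpace Ω] (μ : Measure Ω) [IsProbabilityMeasure μ]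
    (n : ℕ) (X : ℕ → Ω → ℝ)
    (hmeas : ∀ i, Measurable (X i))
    (hindep : iIndepFun (fun i : Fin n => X (i.1 + 1)) μ)
    (hident : ∀ i ∈ Set.Icc 1 n, IdentDistrib (X i) (X 1) μ μ)
    (hval : ∀ i ∈ Set.Icc 1 n, ∀ ω, X i ω ∈ Set.Icc (0:ℝ) 1)
    (c : ℝ) (Y : ℕ → Ω → ℝ) (hY : ∀ i ω, Y i ω = X i ω - i * c)
    (hn : 2 ≤ n) (hc : 0 < c) (hEX : c < ∫ ω, X 1 ω ∂μ)
    (hsupp : μ {ω | X 1 ω ∈ insert (1:ℝ) (insert 0 ((fun i => Vn μ Y i) '' Set.Icc 1 (n-1)))} = 1)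
    (h1 : 0 < μ {ω | X 1 ω = 1}) :
    c < (μ {ω | X 1 ω = 1}).toReal := by
  obtain rfl : Y = fun i ω => X i ω - i * c := funext fun i => funext (hY i)
  have hm : 1 ≤ n - 1 := by omega
  set v := Vn μ (fun i ω => X i ω - i * c) (n - 1)
  set p := μ.real (X 1 ⁻¹' {1})
  have hint : Integrable (X 1) μ :=
    .of_mem_Icc 0 1 (hmeas 1).aemeasurable (.of_forall (hval 1 ⟨le_rfl, by omega⟩))
  have hstop : ∀ τ, IsStopRule (fun i ω => X i ω - i * c) (n - 1) τ → IsStopRule X n τ :=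
    fun τ hτ => (hτ.of_sub _).mono (by omega)
  have hbound : ∀ τ, IsStopRule (fun i ω => X i ω - i * c) (n - 1) τ →
      ∫ ω, (X (τ ω) ω - τ ω * c) ∂μ ≤ 1 - c := fun τ hτ =>
    (hstop τ hτ).integral_sub_mul_le hmeas hident hint hc.le fun i hi ω => (hval i hi ω).2
  have hv_pos : 0 < v := by
    have := le_Vn hbound (isStopRule_one hm)
    simp only [Nat.cast_one, one_mul, integral_sub hint (integrable_const c), integral_const,
      probReal_univ, one_smul] at this
    linarith
  have hv_le : v ≤ 1 - c := Vn_le hm hbound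
  have hprize : ∀ᵐ ω ∂μ, X 1 ω ≤ v + (1 - v) * ({1} : Set ℝ).indicator 1 (X 1 ω) := by
    refine ae_le_add_mul_indicator_one (hmeas 1)
      (((Set.finite_Icc 1 (n - 1)).image _).insert 0).measurableSet hsupp ?_ (by linarith)
    rintro y (rfl | ⟨j, hj, rfl⟩)
    · exact hv_pos.le
    · exact Vn_mono hj.1 hj.2 hbound
  have hcp : c ≤ (1 - v) * p := by
    by_contra! hlt
    have : v ≤ v + ((1 - v) * p - c) := Vn_le hm fun τ hτ => by
      have hsum := one_le_sum_measureReal_le (μ := μ) (hstop τ hτ).one_le (by omega : 1 ≤ n)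
      refine (integral_stopped_sub_mul_le hmeas hindep hident hint (measurableSet_singleton 1) c
        (by linarith) hprize (hstop τ hτ)).trans ?_
      nlinarith
    linarith
  have hp_pos : 0 < p := ENNReal.toReal_pos h1.ne' (measure_ne_top _ _)
  show c < p
  nlinarith

theorem stmt12
    {Ω : Type*} [MeasurableSpace Ω] (μ : Measure Ω) [IsProbabilityMeasure μ]
    (n : ℕ) (X : ℕ → Ω → ℝ)
    (hmeas : ∀ i, Measurable (X i))
    (hindep : iIndepFun (fun i : Fin n => X (i.1 + 1)) μ)
    (hident : ∀ i ∈ Set.Icc 1 n, IdentDistrib (X i) (X 1) μ μ)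
    (hval : ∀ i ∈ Set.Icc 1 n, ∀ ω, X i ω ∈ Set.Icc (0:ℝ) 1)
    (c : ℝ) (Y : ℕ → Ω → ℝ) (hY : ∀ i ω, Y i ω = X i ω - i * c)
    (hn : 2 ≤ n) (hc : 0 < c) (hEX : c < ∫ ω, X 1 ω ∂μ)
    (hsupp : μ {ω | X 1 ω ∈ insert (1:ℝ) (insert 0 ((fun i => Vn μ Y i) '' Set.Icc 1 (n-1)))} = 1)
    (h1 : 0 < μ {ω | X 1 ω = 1}) (h0 : 0 < μ {ω | X 1 ω = 0}) :
    c < (μ {ω | X 1 ω = 1}).toReal :=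
  stmt12_general μ n X hmeas hindep hident hval c Y hY hn hc hEX hsupp h1
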